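/- Let ε > 0, ε' with 0 < ε' ≤ ε, and δ ∈ [0,1]. If a classical channel A satisfies (ε, δ)-local differential privacy, i.e. E_{e^ε}(A(·|a)‖A(·|b)) ≤ δ for all inputs a, b, then the n-fold sequential composition A^{(n)} = A ∘ ⋯ ∘ A satisfies (ε', δ')-local differential privacy with δ' = ((e^ε − e^{ε'} + δ(e^{ε'}+1))/(e^ε + 1))^n. -/
import Mathlib


open Finset Real

def IsProb {X : Type*} [Fintype X] (p : X → ℝ) : Prop :=
  (∀ x, 0 ≤ p x) ∧ ∑ x, p x = 1

noncomputable def hsDiv {X : Type*} [Fintype X] (γ : ℝ) (p q : X → ℝ) : ℝ :=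
  ∑ x, max 0 (p x - γ * q x)

noncomputable def push {X : Type*} [Fintype X] (A : X → X → ℝ) (p : X → ℝ) : X → ℝ :=
  fun y => ∑ x, A x y * p x

/-- Point mass at `a`. -/
noncomputable def delta {X : Type*} [DecidableEq X] (a : X) : X → ℝ :=
  fun x => if x = a then 1 else 0

lemma isProb_delta {X : Type*} [Fintype X] [DecidableEq X] (a : X) : IsProb (delta a) := by
  constructor
  · intro x; unfold delta; split <;> norm_num
  · simp [delta]

lemma isProb_push {X : Type*} [Fintype X] (A : X → X → ℝ) (hA : ∀ x, IsProb (A x))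
    (p : X → ℝ) (hp : IsProb p) : IsProb (push A p) := by
  constructor
  · intro y
    exact Finset.sum_nonneg fun x _ => mul_nonneg ((hA x).1 y) (hp.1 x)
  · rw [show ∑ y, push A p y = ∑ x, (∑ y, A x y) * p x by
      unfold push; rw [Finset.sum_comm]; exact Finset.sum_congr rfl fun x _ => by
        rw [Finset.sum_mul]]
    simp only [(fun x => (hA x).2 : ∀ x, ∑ y, A x y = 1), one_mul]
    exact hp.2

lemma hsDiv_nonneg {X : Type*} [Fintype X] (γ : ℝ) (p q : X → ℝ) : 0 ≤ hsDiv γ p q :=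
  Finset.sum_nonneg fun x _ => le_max_left _ _

lemma hsDiv_le_one {X : Type*} [Fintype X] (γ : ℝ) (hγ : 0 ≤ γ) (p q : X → ℝ)
    (hp : IsProb p) (hq : ∀ x, 0 ≤ q x) : hsDiv γ p q ≤ 1 := by
  calc hsDiv γ p q ≤ ∑ x, p x := by
        refine Finset.sum_le_sum fun x _ => ?_
        exact max_le (hp.1 x) (by nlinarith [hq x])
    _ = 1 := hp.2

lemma isProb_iterate {X : Type*} [Fintype X] (A : X → X → ℝ) (hA : ∀ x, IsProb (A x))
    (n : ℕ) (p : X → ℝ) (hp : IsProb p) : IsProb ((push A)^[n] p) := by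
  induction n with
  | zero => exact hp
  | succ k ihk =>
    rw [Function.iterate_succ_apply']
    exact isProb_push A hA _ ihk

/-- The scalar inequality at the heart of the contraction argument. -/
lemma scalar_ineq (γ γ' δ m M L : ℝ) (hγ'1 : 1 ≤ γ') (hγγ' : γ' ≤ γ)
    (hδ0 : 0 ≤ δ) (hδ1 : δ ≤ 1) (hm0 : 0 ≤ m) (hm1 : m ≤ 1) (hL0 : 0 ≤ L) (hM1 : M ≤ 1)
    (hc1 : M - γ * L ≤ δ) (hc2 : (1 - L) - γ * (1 - M) ≤ δ) :
    (M * m - L * (m - 1 + γ')) * (γ + 1) ≤ (γ - γ' + δ * (γ' + 1)) * m := by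
  have hc1' : 0 ≤ δ + γ * L - M := by linarith
  have hc2' : 0 ≤ γ - 1 + δ - γ * M + L := by linarith
  rcases le_or_gt (m * (γ - 1)) (γ' - 1) with h | h
  · have h1 : 0 ≤ (δ + γ * L - M) * m := mul_nonneg hc1' hm0
    have h2 : 0 ≤ ((γ' - 1) - m * (γ - 1)) * L := mul_nonneg (by linarith) hL0
    have h3 : 0 ≤ m * (γ - γ') * (1 - δ) :=
      mul_nonneg (mul_nonneg hm0 (by linarith)) (by linarith)
    nlinarith [mul_nonneg (by linarith : (0:ℝ) ≤ γ + 1) h1,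
      mul_nonneg (by linarith : (0:ℝ) ≤ γ + 1) h2, h3]
  · have hγ1 : 0 < γ - 1 := by nlinarith
    have hC1 : 0 ≤ (2 * m + γ' - 1) * (γ - 1) + (γ' - 1) * (γ + 1) := by nlinarith
    have hC2 : 0 ≤ 2 * (m * (γ - 1) - (γ' - 1)) := by linarith
    have h1 : 0 ≤ ((2 * m + γ' - 1) * (γ - 1) + (γ' - 1) * (γ + 1)) * (δ + γ * L - M) :=
      mul_nonneg hC1 hc1'
    have h2 : 0 ≤ (2 * (m * (γ - 1) - (γ' - 1))) * (γ - 1 + δ - γ * M + L) :=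
      mul_nonneg hC2 hc2'
    have h3 : 0 ≤ 2 * (γ - 1) * (γ' - 1) * (1 - m) * (1 - δ) := by
      have := mul_nonneg (mul_nonneg (mul_nonneg (by linarith : (0:ℝ) ≤ 2 * (γ - 1))
        (by linarith : (0:ℝ) ≤ γ' - 1)) (by linarith : (0:ℝ) ≤ 1 - m))
        (by linarith : (0:ℝ) ≤ 1 - δ)
      linarith
    nlinarith [h1, h2, h3, hγ1]

/-- Hockey-stick contraction under local DP. -/
lemma contract {X : Type*} [Fintype X] (A : X → X → ℝ)
    (hA : ∀ x, IsProb (A x)) (γ γ' δ : ℝ) (hγ'1 : 1 ≤ γ') (hγγ' : γ' ≤ γ)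
    (hδ0 : 0 ≤ δ) (hδ1 : δ ≤ 1)
    (hLDP : ∀ a b, hsDiv γ (A a) (A b) ≤ δ)
    (p q : X → ℝ) (hp : IsProb p) (hq : IsProb q) :
    hsDiv γ' (push A p) (push A q) ≤
      ((γ - γ' + δ * (γ' + 1)) / (γ + 1)) * hsDiv γ' p q := by
  cases isEmpty_or_nonempty X with
  | inl hempty =>
    exact absurd hp.2 (by simp)
  | inr hne =>
  classical
  have hγ'0 : (0:ℝ) ≤ γ' := by linarith
  set S : Finset X := Finset.univ.filter (fun y => 0 < push A p y - γ' * push A q y) with hS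
  set g : X → ℝ := fun x => ∑ y ∈ S, A x y with hg
  set μ : X → ℝ := fun x => max 0 (p x - γ' * q x) with hμ
  set ν : X → ℝ := fun x => max 0 (γ' * q x - p x) with hν
  have hμ0 : ∀ x, 0 ≤ μ x := fun x => le_max_left _ _
  have hν0 : ∀ x, 0 ≤ ν x := fun x => le_max_left _ _
  have hmax : ∀ t : ℝ, max 0 t = if 0 < t then t else 0 := by
    intro t
    rcases le_or_gt t 0 with h | h
    · simp [max_eq_left h, if_neg (not_lt.2 h)]
    · simp [max_eq_right h.le, if_pos h]
  -- Step A : hsDiv equals sum over S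
  have hsum : hsDiv γ' (push A p) (push A q) = ∑ y ∈ S, (push A p y - γ' * push A q y) := by
    rw [hsDiv, hS, Finset.sum_filter]
    exact Finset.sum_congr rfl fun y _ => hmax _
  -- Step B : swap sums
  have hswap : ∑ y ∈ S, (push A p y - γ' * push A q y)
      = ∑ x, g x * (p x - γ' * q x) := by
    have step1 : ∀ y, push A p y - γ' * push A q y = ∑ x, A x y * (p x - γ' * q x) := by
      intro y
      rw [push, push, Finset.mul_sum, ← Finset.sum_sub_distrib]
      exact Finset.sum_congr rfl fun x _ => by ring
    simp_rw [step1]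
    rw [Finset.sum_comm]
    exact Finset.sum_congr rfl fun x _ => by rw [hg, Finset.sum_mul]
  -- Step C : decomposition p - γ' q = μ - ν
  have hdec : ∀ x, p x - γ' * q x = μ x - ν x := by
    intro x
    rcases le_total (p x - γ' * q x) 0 with h | h
    · rw [hμ, hν]; simp only [max_eq_left h, max_eq_right (by linarith : 0 ≤ γ' * q x - p x)]
      ring
    · rw [hμ, hν]; simp only [max_eq_right h, max_eq_left (by linarith : γ' * q x - p x ≤ 0)]
      ring
  -- extremal points
  obtain ⟨x₀, -, hx₀⟩ := Finset.exists_max_image Finset.univ g ⟨Classical.arbitrary X, mem_univ _⟩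
  obtain ⟨x₁, -, hx₁⟩ := Finset.exists_min_image Finset.univ g ⟨Classical.arbitrary X, mem_univ _⟩
  set M := g x₀ with hMdef
  set L := g x₁ with hLdef
  set m := hsDiv γ' p q with hmdef
  have hmμ : m = ∑ x, μ x := rfl
  -- bounds on M, L
  have hL0 : 0 ≤ L := Finset.sum_nonneg fun y _ => (hA x₁).1 y
  have hM1 : M ≤ 1 := by
    have := Finset.sum_le_sum_of_subset_of_nonneg (Finset.subset_univ S)
      (fun y _ _ => (hA x₀).1 y)
    rw [(hA x₀).2] at this
    exact this
  -- hockey-stick row bound on S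
  have hrowS : ∀ a b : X, (∑ y ∈ S, A a y) - γ * (∑ y ∈ S, A b y) ≤ δ := by
    intro a b
    have h1 : (∑ y ∈ S, A a y) - γ * (∑ y ∈ S, A b y)
        = ∑ y ∈ S, (A a y - γ * A b y) := by
      rw [Finset.sum_sub_distrib, Finset.mul_sum]
    rw [h1]
    calc ∑ y ∈ S, (A a y - γ * A b y) ≤ ∑ y ∈ S, max 0 (A a y - γ * A b y) :=
          Finset.sum_le_sum fun y _ => le_max_right _ _
      _ ≤ ∑ y, max 0 (A a y - γ * A b y) :=
          Finset.sum_le_sum_of_subset_of_nonneg (Finset.subset_univ S)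
            (fun y _ _ => le_max_left _ _)
      _ ≤ δ := hLDP a b
  have hSc : ∀ a : X, ∑ y ∈ Finset.univ \ S, A a y = 1 - ∑ y ∈ S, A a y := by
    intro a
    have := Finset.sum_sdiff (f := A a) (Finset.subset_univ S)
    rw [(hA a).2] at this
    linarith
  have hrowSc : ∀ a b : X, (1 - ∑ y ∈ S, A a y) - γ * (1 - ∑ y ∈ S, A b y) ≤ δ := by
    intro a b
    have h1 : (1 - ∑ y ∈ S, A a y) - γ * (1 - ∑ y ∈ S, A b y)
        = ∑ y ∈ Finset.univ \ S, (A a y - γ * A b y) := by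
      rw [Finset.sum_sub_distrib, ← Finset.mul_sum, hSc a, hSc b]
    rw [h1]
    calc ∑ y ∈ Finset.univ \ S, (A a y - γ * A b y)
        ≤ ∑ y ∈ Finset.univ \ S, max 0 (A a y - γ * A b y) :=
          Finset.sum_le_sum fun y _ => le_max_right _ _
      _ ≤ ∑ y, max 0 (A a y - γ * A b y) :=
          Finset.sum_le_sum_of_subset_of_nonneg (Finset.sdiff_subset)
            (fun y _ _ => le_max_left _ _)
      _ ≤ δ := hLDP a b
  have hc1 : M - γ * L ≤ δ := hrowS x₀ x₁
  have hc2 : (1 - L) - γ * (1 - M) ≤ δ := hrowSc x₁ x₀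
  -- bounds on m
  have hm0 : 0 ≤ m := hsDiv_nonneg _ _ _
  have hm1 : m ≤ 1 := hsDiv_le_one γ' hγ'0 p q hp hq.1
  -- mass of ν
  have hνsum : ∑ x, ν x = m - 1 + γ' := by
    have h1 : ∑ x, (μ x - ν x) = 1 - γ' := by
      calc ∑ x, (μ x - ν x) = ∑ x, (p x - γ' * q x) :=
            Finset.sum_congr rfl fun x _ => (hdec x).symm
        _ = (∑ x, p x) - γ' * ∑ x, q x := by
            rw [Finset.sum_sub_distrib, Finset.mul_sum]
        _ = 1 - γ' := by rw [hp.2, hq.2]; ring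
    rw [Finset.sum_sub_distrib, ← hmμ] at h1
    linarith
  -- bound the main expression
  have hgμ : ∑ x, g x * μ x ≤ M * m := by
    rw [hmμ, Finset.mul_sum]
    exact Finset.sum_le_sum fun x _ =>
      mul_le_mul_of_nonneg_right (hx₀ x (mem_univ x)) (hμ0 x)
  have hgν : L * (m - 1 + γ') ≤ ∑ x, g x * ν x := by
    rw [← hνsum, Finset.mul_sum]
    exact Finset.sum_le_sum fun x _ =>
      mul_le_mul_of_nonneg_right (hx₁ x (mem_univ x)) (hν0 x)
  have hmain : hsDiv γ' (push A p) (push A q) ≤ M * m - L * (m - 1 + γ') := by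
    rw [hsum, hswap]
    have : ∑ x, g x * (p x - γ' * q x) = (∑ x, g x * μ x) - ∑ x, g x * ν x := by
      rw [← Finset.sum_sub_distrib]
      exact Finset.sum_congr rfl fun x _ => by rw [hdec x]; ring
    rw [this]
    linarith
  -- final scalar step
  have hγ1 : (0:ℝ) < γ + 1 := by linarith
  have hLM : L ≤ M := hx₁ x₀ (mem_univ x₀)
  have hscalar := scalar_ineq γ γ' δ m M L hγ'1 hγγ' hδ0 hδ1 hm0 hm1 hL0 hM1 hc1 hc2
  calc hsDiv γ' (push A p) (push A q) ≤ M * m - L * (m - 1 + γ') := hmain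
    _ ≤ (γ - γ' + δ * (γ' + 1)) / (γ + 1) * m := by
        rw [div_mul_eq_mul_div, le_div_iff₀ hγ1]
        exact hscalar
    _ = (γ - γ' + δ * (γ' + 1)) / (γ + 1) * hsDiv γ' p q := by rw [hmdef]

theorem stmt15 {X : Type*} [Fintype X] [DecidableEq X] (A : X → X → ℝ)
    (hA : ∀ x, IsProb (A x)) (ε ε' δ : ℝ) (hε : 0 < ε) (hε'0 : 0 < ε') (hε' : ε' ≤ ε)
    (hδ0 : 0 ≤ δ) (hδ1 : δ ≤ 1)
    (hLDP : ∀ a b : X, hsDiv (Real.exp ε) (A a) (A b) ≤ δ) (n : ℕ) :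
    ∀ a b : X,
      hsDiv (Real.exp ε') ((push A)^[n] (delta a)) ((push A)^[n] (delta b)) ≤
        ((Real.exp ε - Real.exp ε' + δ * (Real.exp ε' + 1)) / (Real.exp ε + 1)) ^ n := by
  intro a b
  set γ := Real.exp ε with hγdef
  set γ' := Real.exp ε' with hγ'def
  have hγ'1 : 1 ≤ γ' := Real.one_le_exp hε'0.le
  have hγγ' : γ' ≤ γ := Real.exp_le_exp.2 hε'
  have hδ'0 : 0 ≤ (γ - γ' + δ * (γ' + 1)) / (γ + 1) := by
    apply div_nonneg
    · nlinarith
    · linarith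
  induction n with
  | zero =>
    simp only [Function.iterate_zero_apply, pow_zero]
    exact hsDiv_le_one γ' (by linarith) (delta a) (delta b) (isProb_delta a)
      (isProb_delta b).1
  | succ n ih =>
    have hpa : IsProb ((push A)^[n] (delta a)) := isProb_iterate A hA n _ (isProb_delta a)
    have hpb : IsProb ((push A)^[n] (delta b)) := isProb_iterate A hA n _ (isProb_delta b)
    rw [Function.iterate_succ_apply', Function.iterate_succ_apply', pow_succ]
    calc hsDiv γ' (push A ((push A)^[n] (delta a))) (push A ((push A)^[n] (delta b)))
        ≤ (γ - γ' + δ * (γ' + 1)) / (γ + 1) *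
            hsDiv γ' ((push A)^[n] (delta a)) ((push A)^[n] (delta b)) :=
          contract A hA γ γ' δ hγ'1 hγγ' hδ0 hδ1 hLDP _ _ hpa hpb
      _ ≤ (γ - γ' + δ * (γ' + 1)) / (γ + 1) *
            ((γ - γ' + δ * (γ' + 1)) / (γ + 1)) ^ n :=
          mul_le_mul_of_nonneg_left ih hδ'0
      _ = ((γ - γ' + δ * (γ' + 1)) / (γ + 1)) ^ n * ((γ - γ' + δ * (γ' + 1)) / (γ + 1)) := by
          ring
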